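/- The semistrong chromatic index of the complete bipartite graph K_{3,3} equals 9. -/

import Mathlib

open SimpleGraph

variable {V : Type*}

/-- The set of endvertices of the edges in `M`. -/
def edgeVerts (M : Set (Sym2 V)) : Set V := {v | ∃ e ∈ M, v ∈ e}

/-- `M` is a matching of the simple graph `G`: a set of edges of `G`
that are pairwise disjoint. -/
def IsMatchingSet (G : SimpleGraph V) (M : Set (Sym2 V)) : Prop :=
  M ⊆ G.edgeSet ∧ ∀ e ∈ M, ∀ f ∈ M, e ≠ f → ∀ v : V, v ∈ e → v ∉ f

/-- `M` is a semistrong matching of `G`: a matching such that every edge of `M`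
has an endvertex of degree one in the subgraph of `G` induced by the
endvertices of the edges of `M`. -/
def IsSemistrongMatching (G : SimpleGraph V) (M : Set (Sym2 V)) : Prop :=
  IsMatchingSet G M ∧
    ∀ e ∈ M, ∃ u v : V, e = s(u, v) ∧ ∀ w ∈ edgeVerts M, G.Adj u w → w = v

/-- `G` has a semistrong edge-coloring with (at most) `k` colors: a proper
edge-coloring in which every color class is a semistrong matching. -/
def HasSemistrongEdgeColoring (G : SimpleGraph V) (k : ℕ) : Prop :=
  ∃ c : Sym2 V → ℕ, (∀ e ∈ G.edgeSet, c e < k) ∧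
    ∀ i : ℕ, IsSemistrongMatching G {e | e ∈ G.edgeSet ∧ c e = i}

/-- The semistrong chromatic index of `G`. -/
noncomputable def ssChromIdx (G : SimpleGraph V) : ℕ :=
  sInf {k | HasSemistrongEdgeColoring G k}

/-
Two disjoint edges of `K_{3,3}` induce a `4`-cycle, in which every vertex has degree two, so a
semistrong matching of `K_{3,3}` has at most one edge. Hence every color class of a semistrong
edge-coloring is a single edge and `χ''_ss(K_{3,3})` is the number of edges, `9`.
-/

namespace SimpleGraph

variable {G : SimpleGraph V} {M : Set (Sym2 V)}

lemma isSemistrongMatching_of_subsingleton (hMG : M ⊆ G.edgeSet) (hM : M.Subsingleton) :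
    IsSemistrongMatching G M := by
  refine ⟨⟨hMG, fun e he f hf hne => absurd (hM he hf) hne⟩, fun e he => ?_⟩
  induction e using Sym2.ind with
  | _ x y =>
    refine ⟨x, y, rfl, fun w ⟨f, hf, hwf⟩ hxw => ?_⟩
    rw [hM hf he, Sym2.mem_iff] at hwf
    rcases hwf with rfl | rfl
    · exact absurd hxw (G.loopless.irrefl w)
    · rfl

/-- If every vertex is adjacent to an endvertex of every edge, then two disjoint edges `uv`, `xy`
would give `u` a neighbour in `{x, y}` other than `v`. -/
lemma IsSemistrongMatching.subsingleton
    (hdom : ∀ u x y, G.Adj x y → G.Adj u x ∨ G.Adj u y) (hM : IsSemistrongMatching G M) :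
    M.Subsingleton := by
  obtain ⟨⟨hMG, hdisj⟩, hsemi⟩ := hM
  intro e he f hf
  by_contra hne
  obtain ⟨u, v, rfl, hu⟩ := hsemi _ he
  induction f using Sym2.ind with
  | _ x y =>
    have hv : v ∈ s(x, y) := by
      rcases hdom u x y (hMG hf) with hux | huy
      · exact hu x ⟨_, hf, Sym2.mem_mk_left x y⟩ hux ▸ Sym2.mem_mk_left x y
      · exact hu y ⟨_, hf, Sym2.mem_mk_right x y⟩ huy ▸ Sym2.mem_mk_right x y
    exact hdisj _ he _ hf hne v (Sym2.mem_mk_right u v) hv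

lemma completeBipartiteGraph_adj_or_adj {α β : Type*} (u : α ⊕ β) {x y : α ⊕ β}
    (hxy : (completeBipartiteGraph α β).Adj x y) :
    (completeBipartiteGraph α β).Adj u x ∨ (completeBipartiteGraph α β).Adj u y := by
  rcases u with u | u <;> rcases x with x | x <;> rcases y with y | y <;> simp_all

lemma hasSemistrongEdgeColoring_ncard_edgeSet (hG : G.edgeSet.Finite) :
    HasSemistrongEdgeColoring G G.edgeSet.ncard := by
  classical
  have := hG.to_subtype
  let index := Finite.equivFin G.edgeSet
  let c : Sym2 V → ℕ := fun e => if he : e ∈ G.edgeSet then index ⟨e, he⟩ else 0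
  have hc : Set.InjOn c G.edgeSet := fun e he f hf hef => by
    simpa only [c, dif_pos he, dif_pos hf, Fin.val_inj, index.apply_eq_iff_eq, Subtype.mk.injEq]
      using hef
  refine ⟨c, fun e he => ?_, fun i => ?_⟩
  · simpa only [c, dif_pos he, Nat.card_coe_set_eq] using (index ⟨e, he⟩).isLt
  · exact isSemistrongMatching_of_subsingleton (fun e he => he.1)
      fun e ⟨he, hei⟩ f ⟨hf, hfi⟩ => hc he hf (hei.trans hfi.symm)

lemma HasSemistrongEdgeColoring.ncard_edgeSet_le {k : ℕ}
    (hss : ∀ M, IsSemistrongMatching G M → M.Subsingleton) (hk : HasSemistrongEdgeColoring G k) :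
    G.edgeSet.ncard ≤ k := by
  obtain ⟨c, hck, hclass⟩ := hk
  have hc : Set.InjOn c G.edgeSet := fun e he f hf hef =>
    hss _ (hclass (c f)) ⟨he, hef⟩ ⟨hf, rfl⟩
  calc G.edgeSet.ncard ≤ (Set.Iio k).ncard :=
        Set.ncard_le_ncard_of_injOn c hck hc (Set.finite_Iio k)
    _ = k := Set.ncard_Iio_nat k

lemma ssChromIdx_eq_ncard_edgeSet (hG : G.edgeSet.Finite)
    (hss : ∀ M, IsSemistrongMatching G M → M.Subsingleton) :
    ssChromIdx G = G.edgeSet.ncard :=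
  le_antisymm (Nat.sInf_le (hasSemistrongEdgeColoring_ncard_edgeSet hG))
    (le_csInf ⟨_, hasSemistrongEdgeColoring_ncard_edgeSet hG⟩
      fun _ hk => hk.ncard_edgeSet_le hss)

lemma ssChromIdx_completeBipartiteGraph (α β : Type*) [Finite α] [Finite β] :
    ssChromIdx (completeBipartiteGraph α β) = Nat.card α * Nat.card β := by
  rw [ssChromIdx_eq_ncard_edgeSet (Set.toFinite _) fun M hM =>
      hM.subsingleton fun u _ _ => completeBipartiteGraph_adj_or_adj u,
    Set.ncard_def, encard_edgeSet_completeBipartiteGraph]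
  simp [ENat.card_eq_coe_natCard]

end SimpleGraph

/-- The semistrong chromatic index of `K_{3,3}` equals `9`. -/
theorem ssChromIdx_K33 :
    ssChromIdx (completeBipartiteGraph (Fin 3) (Fin 3)) = 9 := by
  simp [ssChromIdx_completeBipartiteGraph]
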